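/- arXiv:1807.06516 — 2 statements merged into one kernel-verified Lean document; each statement's English description precedes it below -/
import Mathlib

section
/- Let M be a matroid on a finite linearly ordered ground set E and let B be a basis of M. Let F be the external part of B in M, i.e., the unique subset of E such that B ∩ F is a basis of M(F), Int_{M(F)}(B ∩ F) = ∅, Ext_{M(F)}(B ∩ F) = Ext_M(B), Int_{M/F}(B \ F) = Int_M(B), and Ext_{M/F}(B \ F) = ∅. Let F̂ be the external part of the basis E \ B of the dual matroid M*, defined by the same characterization applied to M* and E \ B. Then F̂ = E \ F; in other words, E is the disjoint union of the external part of B in M and the external part of E \ B in M*. -/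
open Matroid Set

namespace ActiveBij

variable {α : Type*}

/-- Deletion of a set of elements from a matroid. -/
def del (M : Matroid α) (D : Set α) : Matroid α := M ↾ (M.E \ D)

/-- Contraction of a set of elements of a matroid. -/
def con (M : Matroid α) (C : Set α) : Matroid α := (del M✶ C)✶

/-- The minor `M(G)/F` : restriction to `G` followed by contraction of `F`. -/
def minor (M : Matroid α) (G F : Set α) : Matroid α := con (M ↾ G) F

/-- A circuit of a matroid : a minimal dependent set. -/
def Cct (M : Matroid α) (C : Set α) : Prop := Minimal M.Dep C

/-- A cocircuit of a matroid : a circuit of the dual. -/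
def Cocct (M : Matroid α) (C : Set α) : Prop := Cct M✶ C

/-- The fundamental circuit of `e ∉ B` with respect to a base `B` :
the unique circuit contained in `B ∪ {e}`. -/
def fundCct (M : Matroid α) (B : Set α) (e : α) : Set α :=
  ⋂₀ {C | Cct M C ∧ C ⊆ insert e B}

/-- The fundamental cocircuit of `b ∈ B` with respect to a base `B` :
the unique cocircuit contained in `(E \ B) ∪ {b}`. -/
def fundCocct (M : Matroid α) (B : Set α) (b : α) : Set α :=
  ⋂₀ {C | Cocct M C ∧ C ⊆ insert b (M.E \ B)}

/-- The set of internally active elements of a base `B` :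
elements `b ∈ B` that are the minimum of their fundamental cocircuit. -/
def ActInt [LinearOrder α] (M : Matroid α) (B : Set α) : Set α :=
  {b ∈ B | IsLeast (fundCocct M B b) b}

/-- The set of externally active elements of a base `B` :
elements `e ∈ M.E \ B` that are the minimum of their fundamental circuit. -/
def ActExt [LinearOrder α] (M : Matroid α) (B : Set α) : Set α :=
  {e ∈ M.E \ B | IsLeast (fundCct M B e) e}

/-- A uniactive internal base : internal activity `1` and external activity `0`. -/
def UIntBase [LinearOrder α] (M : Matroid α) (B : Set α) : Prop :=
  M.IsBase B ∧ (ActInt M B).ncard = 1 ∧ (ActExt M B).ncard = 0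

/-- A uniactive external base : internal activity `0` and external activity `1`. -/
def UExtBase [LinearOrder α] (M : Matroid α) (B : Set α) : Prop :=
  M.IsBase B ∧ (ActInt M B).ncard = 0 ∧ (ActExt M B).ncard = 1

/-- `β(M)` : the number of uniactive internal bases. -/
noncomputable def beta [LinearOrder α] (M : Matroid α) : ℕ :=
  {B : Set α | UIntBase M B}.ncard

/-- `β*(M)` : the number of uniactive external bases. -/
noncomputable def betaStar [LinearOrder α] (M : Matroid α) : ℕ :=
  {B : Set α | UExtBase M B}.ncard

/-- A connected matroid : any two elements of the ground set lie on a common circuit. -/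
def Conn (M : Matroid α) : Prop :=
  M.E.Nonempty ∧ ∀ ⦃x y⦄, x ∈ M.E → y ∈ M.E →
    (x = y ∨ ∃ C, Cct M C ∧ x ∈ C ∧ y ∈ C)

/-- A matroid consisting of a single loop. -/
def IsLoopMatroid (M : Matroid α) : Prop := ∃ e, M.E = {e} ∧ M.Dep {e}

/-- A matroid consisting of a single coloop (isthmus). -/
def IsColoopMatroid (M : Matroid α) : Prop := ∃ e, M.E = {e} ∧ M.Indep {e}

/-- A flat : a subset of the ground set whose complement is a union of cocircuits. -/
def IsFlat (M : Matroid α) (F : Set α) : Prop :=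
  F ⊆ M.E ∧ ∃ S : Set (Set α), (∀ C ∈ S, Cocct M C) ∧ M.E \ F = ⋃₀ S

/-- A dual-flat : a union of circuits. -/
def IsDualFlat (M : Matroid α) (F : Set α) : Prop :=
  ∃ S : Set (Set α), (∀ C ∈ S, Cct M C) ∧ F = ⋃₀ S

/-- A cyclic flat : both a flat and a dual-flat. -/
def IsCyclicFlat (M : Matroid α) (F : Set α) : Prop :=
  IsFlat M F ∧ IsDualFlat M F

/-- The data of a filtration : `∅ = F'_ε ⊂ ⋯ ⊂ F'_0 = F_c = F_0 ⊂ ⋯ ⊂ F_ι = E`. -/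
structure Filtration (α : Type*) where
  ι : ℕ
  ε : ℕ
  F : Fin (ι + 1) → Set α
  F' : Fin (ε + 1) → Set α

/-- The `k`-th internal minor `M(F_k)/F_{k-1}` induced by a filtration. -/
def intMinor (M : Matroid α) (f : Filtration α) (k : Fin f.ι) : Matroid α :=
  minor M (f.F k.succ) (f.F k.castSucc)

/-- The `k`-th external minor `M(F'_{k-1})/F'_k` induced by a filtration. -/
def extMinor (M : Matroid α) (f : Filtration α) (k : Fin f.ε) : Matroid α :=
  minor M (f.F' k.castSucc) (f.F' k.succ)

/-- The filtration property : strictly nested subsets from `∅` to `M.E` through `F_c`,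
with the minima of the successive differences increasing on each side of `F_c`. -/
def IsFiltration [LinearOrder α] (M : Matroid α) (f : Filtration α) : Prop :=
  f.F' (Fin.last f.ε) = ∅ ∧
  f.F' 0 = f.F 0 ∧
  f.F (Fin.last f.ι) = M.E ∧
  (∀ k : Fin f.ι, f.F k.castSucc ⊂ f.F k.succ) ∧
  (∀ k : Fin f.ε, f.F' k.succ ⊂ f.F' k.castSucc) ∧
  (∀ j k : Fin f.ι, j < k → ∀ a b : α,
    IsLeast (f.F j.succ \ f.F j.castSucc) a →
    IsLeast (f.F k.succ \ f.F k.castSucc) b → a < b) ∧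
  (∀ j k : Fin f.ε, j < k → ∀ a b : α,
    IsLeast (f.F' j.castSucc \ f.F' j.succ) a →
    IsLeast (f.F' k.castSucc \ f.F' k.succ) b → a < b)

/-- A connected filtration : a filtration all of whose induced internal minors are
connected and not single loops, and all of whose induced external minors are connected
and not single coloops. -/
def IsConnFiltration [LinearOrder α] (M : Matroid α) (f : Filtration α) : Prop :=
  IsFiltration M f ∧
  (∀ k : Fin f.ι, Conn (intMinor M f k) ∧ ¬ IsLoopMatroid (intMinor M f k)) ∧
  (∀ k : Fin f.ε, Conn (extMinor M f k) ∧ ¬ IsColoopMatroid (extMinor M f k))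

/-- An active filtration of a base `B` : a filtration such that `B` induces a uniactive
internal base of each internal minor and a uniactive external base of each external minor. -/
def IsActiveFiltration [LinearOrder α] (M : Matroid α) (B : Set α) (f : Filtration α) : Prop :=
  IsFiltration M f ∧
  (∀ k : Fin f.ι, UIntBase (intMinor M f k) (B ∩ (f.F k.succ \ f.F k.castSucc))) ∧
  (∀ k : Fin f.ε, UExtBase (extMinor M f k) (B ∩ (f.F' k.castSucc \ f.F' k.succ)))

/-- The subset `F(X)` attached to a base `B` and a set `X` of internally active elements :
`B ∩ F` is a base of `M(F)`, the activities of the induced bases of `M(F)` and `M/F`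
split those of `B`, with `Int` of the contraction part equal to `X`. -/
def DecompSet [LinearOrder α] (M : Matroid α) (B X F : Set α) : Prop :=
  F ⊆ M.E ∧
  (M ↾ F).IsBase (B ∩ F) ∧
  ActInt (M ↾ F) (B ∩ F) = ActInt M B \ X ∧
  ActExt (M ↾ F) (B ∩ F) = ActExt M B ∧
  ActInt (con M F) (B \ F) = X ∧
  ActExt (con M F) (B \ F) = ∅

/-- The dual of a filtration : complement every subset and exchange the two sides. -/
def dualFil (M : Matroid α) (f : Filtration α) : Filtration α :=
  ⟨f.ε, f.ι, fun k => M.E \ f.F' k, fun k => M.E \ f.F k⟩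

/-- The set of subsets occurring in a filtration. -/
def termsOf (f : Filtration α) : Set (Set α) :=
  {H | ∃ k, f.F k = H} ∪ {H | ∃ k, f.F' k = H}

end ActiveBij

/-!
A set `F` such that `B ∩ F` is a base of `M(F)` without internally active elements and `B \ F`
is a base of `M/F` without externally active elements is unique. Indeed, if `F` and `G` are two
such sets, every `a ∈ F \ G` outside `B` has a smaller element of `F \ G` in its fundamental
circuit in `M/G`, as `a` is not externally active there and this circuit lies in
`(B ∩ F) \ G ∪ {a}`; for `a ∈ B` the same holds by duality. So `F \ G` has no least element,
hence is empty. These conditions are self-dual: `E \ F` satisfies them for the base `E \ B`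
of `M*`. Hence the complement of the external part of `E \ B` in `M*` satisfies them for `B`
in `M`, and so equals the external part of `B`.
-/

namespace Matroid

variable {α : Type*} {M : Matroid α} {B G I J : Set α} {e : α}

lemma Indep.fundCircuit_eq_of_subset (hI : M.Indep I) (hJI : J ⊆ I)
    (he : e ∈ M.closure J) (heI : e ∉ I) : M.fundCircuit e I = M.fundCircuit e J :=
  (((hI.subset hJI).fundCircuit_isCircuit he (notMem_subset hJI heI)).eq_fundCircuit_of_subset hI
    ((M.fundCircuit_subset_insert e J).trans (insert_subset_insert hJI))).symm

lemma IsBase.contract_isBase_sdiff (hB : M.IsBase B) (hBG : M.IsBasis (B ∩ G) G) :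
    (M ／ G).IsBase (B \ G) := by
  rw [← isBasis_ground_iff, contract_ground]
  exact hB.isBasis_ground.contract_isBasis hBG (hB.indep.subset (by tauto_set))

end Matroid

namespace ActiveBij

section

variable {α : Type*} {M : Matroid α} {B F G I : Set α} {a e : α}

lemma con_eq_contract (M : Matroid α) (C : Set α) : con M C = M ／ C := rfl

lemma fundCct_eq_fundCircuit (hI : M.Indep I) (he : e ∈ M.closure I) (heI : e ∉ I) :
    fundCct M I e = M.fundCircuit e I := by
  have hcircuits : {C | Cct M C ∧ C ⊆ insert e I} = {M.fundCircuit e I} := by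
    ext C
    refine ⟨fun h ↦ IsCircuit.eq_fundCircuit_of_subset h.1 hI h.2, ?_⟩
    rintro rfl
    exact ⟨hI.fundCircuit_isCircuit he heI, M.fundCircuit_subset_insert e I⟩
  rw [fundCct, hcircuits, sInter_singleton]

lemma exists_mem_fundCircuit_lt_of_actExt_eq_empty [LinearOrder α] (hB : M.IsBase B)
    (hext : ActExt M B = ∅) (he : e ∈ M.E \ B) : ∃ l ∈ M.fundCircuit e B, l < e := by
  by_contra! hge
  have hcl : e ∈ M.closure B := by rw [hB.closure_eq]; exact he.1
  have hactive : e ∈ ActExt M B :=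
    ⟨he, by rw [fundCct_eq_fundCircuit hB.indep hcl he.2]; exact ⟨M.mem_fundCircuit e B, hge⟩⟩
  simp [hext] at hactive

lemma actExt_dual [LinearOrder α] (hB : B ⊆ M.E) : ActExt M✶ (M.E \ B) = ActInt M B := by
  ext x
  simp only [ActExt, ActInt, mem_ofPred_eq, dual_ground, sdiff_sdiff_cancel_left hB]
  rfl

lemma actInt_dual [LinearOrder α] (hB : B ⊆ M.E) : ActInt M✶ (M.E \ B) = ActExt M B := by
  ext x
  simp only [ActInt, ActExt, mem_ofPred_eq, fundCocct, fundCct, Cocct, dual_dual, dual_ground,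
    sdiff_sdiff_cancel_left hB]

def IsActivitySeparator [LinearOrder α] (M : Matroid α) (B F : Set α) : Prop :=
  F ⊆ M.E ∧ (M ↾ F).IsBase (B ∩ F) ∧ ActInt (M ↾ F) (B ∩ F) = ∅ ∧
    ActExt (M ／ F) (B \ F) = ∅

lemma DecompSet.isActivitySeparator [LinearOrder α] (h : DecompSet M B (ActInt M B) F) :
    IsActivitySeparator M B F := by
  obtain ⟨hFE, hbase, hint, -, -, hext⟩ := h
  exact ⟨hFE, hbase, by rw [hint, sdiff_self], con_eq_contract M F ▸ hext⟩

namespace IsActivitySeparator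

variable [LinearOrder α]

lemma dual (hB : M.IsBase B) (h : IsActivitySeparator M B F) :
    IsActivitySeparator M✶ (M.E \ B) (M.E \ F) := by
  obtain ⟨hFE, hbase, hint, hext⟩ := h
  have hBF : M.IsBasis (B ∩ F) F := (isBase_restrict_iff hFE).1 hbase
  have hrestrict : M✶ ↾ (M.E \ F) = (M ／ F)✶ := by rw [dual_contract]; rfl
  have hcontract : M✶ ／ (M.E \ F) = (M ↾ F)✶ := by rw [← dual_delete, delete_compl hFE]
  refine ⟨sdiff_subset, ?_, ?_, ?_⟩
  · rw [isBase_restrict_iff (show M.E \ F ⊆ M✶.E from sdiff_subset)]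
    exact hB.compl_inter_isBasis_of_inter_isBasis hBF
  · have hset : (M.E \ B) ∩ (M.E \ F) = (M ／ F).E \ (B \ F) := by
      rw [contract_ground]; tauto_set
    have hBF_sub : B \ F ⊆ (M ／ F).E := sdiff_subset_sdiff_left hB.subset_ground
    rw [hrestrict, hset, actInt_dual hBF_sub, hext]
  · have hset : (M.E \ B) \ (M.E \ F) = (M ↾ F).E \ (B ∩ F) := by
      rw [restrict_ground_eq]; tauto_set
    rw [hcontract, hset, actExt_dual (show B ∩ F ⊆ (M ↾ F).E from inter_subset_right), hint]

lemma exists_lt_mem_sdiff_of_notMem (hB : M.IsBase B) (hF : IsActivitySeparator M B F)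
    (hG : IsActivitySeparator M B G) (haF : a ∈ F) (haG : a ∉ G) (haB : a ∉ B) :
    ∃ l < a, l ∈ F \ G := by
  have hBF : M.IsBasis (B ∩ F) F := (isBase_restrict_iff hF.1).1 hF.2.1
  have hBG : M.IsBasis (B ∩ G) G := (isBase_restrict_iff hG.1).1 hG.2.1
  have hcon : (M ／ G).IsBase (B \ G) := hB.contract_isBase_sdiff hBG
  have hacl : a ∈ (M ／ G).closure ((B ∩ F) \ G) := by
    rw [contract_closure_eq]
    exact ⟨M.closure_subset_closure (by tauto_set) (hBF.subset_closure haF), haG⟩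
  obtain ⟨l, hlC, hla⟩ := exists_mem_fundCircuit_lt_of_actExt_eq_empty hcon hG.2.2.2
    ⟨⟨hF.1 haF, haG⟩, fun h ↦ haB h.1⟩
  rw [hcon.indep.fundCircuit_eq_of_subset (sdiff_subset_sdiff_left inter_subset_left) hacl
    (fun h ↦ haB h.1)] at hlC
  obtain rfl | ⟨⟨-, hlF⟩, hlG⟩ := (M ／ G).fundCircuit_subset_insert _ _ hlC
  · exact absurd hla (lt_irrefl l)
  · exact ⟨l, hla, hlF, hlG⟩

lemma exists_lt_mem_sdiff (hB : M.IsBase B) (hF : IsActivitySeparator M B F)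
    (hG : IsActivitySeparator M B G) (haF : a ∈ F) (haG : a ∉ G) : ∃ l < a, l ∈ F \ G := by
  by_cases haB : a ∈ B
  · obtain ⟨l, hla, ⟨hlE, hlG⟩, hlF⟩ := exists_lt_mem_sdiff_of_notMem hB.compl_isBase_dual
      (hG.dual hB) (hF.dual hB) ⟨hF.1 haF, haG⟩ (fun h ↦ h.2 haF) (fun h ↦ h.2 haB)
    exact ⟨l, hla, by_contra fun h ↦ hlF ⟨hlE, h⟩, hlG⟩
  · exact exists_lt_mem_sdiff_of_notMem hB hF hG haF haG haB

lemma subset [M.Finite] (hB : M.IsBase B) (hF : IsActivitySeparator M B F)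
    (hG : IsActivitySeparator M B G) : F ⊆ G := by
  by_contra hFG
  obtain ⟨a, haFG, hmin⟩ := (M.ground_finite.subset (sdiff_subset.trans hF.1)).exists_minimal
    (sdiff_nonempty.2 hFG)
  obtain ⟨l, hla, hl⟩ := hF.exists_lt_mem_sdiff hB hG haFG.1 haFG.2
  exact lt_irrefl l (hla.trans_le (hmin hl hla.le))

lemma eq [M.Finite] (hB : M.IsBase B) (hF : IsActivitySeparator M B F)
    (hG : IsActivitySeparator M B G) : F = G :=
  (hF.subset hB hG).antisymm (hG.subset hB hF)

end IsActivitySeparator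

end

/-- The external part of the base `E \ B` of the dual matroid is the complement of the
external part of the base `B` of `M`. -/
theorem stmt6 {α : Type*} [LinearOrder α] (M : Matroid α) [M.Finite]
    (B : Set α) (hB : M.IsBase B) (F Fhat : Set α)
    (hF : DecompSet M B (ActInt M B) F)
    (hFhat : DecompSet M✶ (M.E \ B) (ActInt M✶ (M.E \ B)) Fhat) :
    Fhat = M.E \ F := by
  have hcompl : IsActivitySeparator M B (M.E \ Fhat) := by
    have h := hFhat.isActivitySeparator.dual hB.compl_isBase_dual
    rwa [dual_dual, dual_ground, sdiff_sdiff_cancel_left hB.subset_ground] at h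
  rw [hF.isActivitySeparator.eq hB hcompl, sdiff_sdiff_cancel_left (show Fhat ⊆ M.E from hFhat.1)]

end ActiveBij
end

section
/- Let M be a matroid on a finite linearly ordered ground set E and let ∅ = F'_ε ⊂ … ⊂ F'_0 = F_c = F_0 ⊂ … ⊂ F_ι = E be a filtration of M. Then this filtration is a connected filtration of M if and only if the product (∏_{k=1}^{ι} β(M(F_k)/F_{k−1})) · (∏_{k=1}^{ε} β*(M(F'_{k−1})/F'_k)) is nonzero, where β(N) is the number of uniactive internal bases of N and β*(N) is the number of uniactive external bases of N. -/
open Matroid Set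

/-!
By Crapo's theorem, `β(N) ≠ 0` exactly when `N` is connected and not a single loop; since
`β*(N) = β(N✶)` and connectivity is self-dual, `β*(N) ≠ 0` exactly when `N` is connected and not a
single coloop. Applied to each minor of the filtration this is the theorem.

For Crapo's theorem, a uniactive internal base forces connectivity because the least element of
any separator is active. Conversely, for connected `M` with largest element `e`, one of `M ＼ e`,
`M ／ e` is connected (Tutte), and a uniactive internal base `B` of it gives the uniactive internal
base `B`, resp. `insert e B`, of `M`: being largest, `e` never changes which element is the
minimum of a fundamental circuit or cocircuit.
-/

namespace ActiveBij

variable {α : Type*} {M : Matroid α} {A B B' C C₁ C₂ D I : Set α} {b e m v x z : α}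

lemma conn_iff : Conn M ↔ M.E.Nonempty ∧ ∀ ⦃x y⦄, x ∈ M.E → y ∈ M.E →
    x = y ∨ ∃ C, M.IsCircuit C ∧ x ∈ C ∧ y ∈ C := Iff.rfl

/-- Strong induction on `|C₁ \ C₂|`: eliminating twice replaces `C₁` by a circuit through `x`
that still meets `C₂` but has fewer elements outside it. -/
lemma exists_isCircuit_mem_mem_of_inter_nonempty [M.Finitary] (hC₁ : M.IsCircuit C₁)
    (hC₂ : M.IsCircuit C₂) (hmeet : (C₁ ∩ C₂).Nonempty) (hx : x ∈ C₁) (hz : z ∈ C₂) :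
    ∃ C, M.IsCircuit C ∧ x ∈ C ∧ z ∈ C := by
  induction h : (C₁ \ C₂).ncard using Nat.strong_induction_on generalizing C₁ with
  | _ n ih =>
  by_cases hxC₂ : x ∈ C₂
  · exact ⟨C₂, hC₂, hxC₂, hz⟩
  by_cases hzC₁ : z ∈ C₁
  · exact ⟨C₁, hC₁, hx, hzC₁⟩
  obtain ⟨y, hyC₁, hyC₂⟩ := hmeet
  obtain ⟨C₃, hC₃ss, hC₃, hzC₃⟩ := hC₂.strong_elimination hC₁ hyC₂ hyC₁ hz hzC₁
  by_cases hxC₃ : x ∈ C₃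
  · exact ⟨C₃, hC₃, hxC₃, hzC₃⟩
  obtain ⟨u, huC₃, huC₂⟩ := not_subset.1 fun hss : C₃ ⊆ C₂ =>
    hC₃.not_indep (hC₂.ssubset_indep ((subset_sdiff_singleton hss
      fun hy => (hC₃ss hy).2 rfl).trans_ssubset (sdiff_singleton_ssubset.2 hyC₂)))
  have huC₁ : u ∈ C₁ := (hC₃ss huC₃).1.resolve_left huC₂
  obtain ⟨C₄, hC₄ss, hC₄, hxC₄⟩ := hC₁.strong_elimination hC₃ huC₁ huC₃ hx hxC₃
  have hC₄out : C₄ \ C₂ ⊆ (C₁ \ C₂) \ {u} := by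
    rintro w ⟨hwC₄, hwC₂⟩
    obtain ⟨hw | hw, hwu⟩ := hC₄ss hwC₄
    · exact ⟨⟨hw, hwC₂⟩, hwu⟩
    · exact ⟨⟨(hC₃ss hw).1.resolve_left hwC₂, hwC₂⟩, hwu⟩
  have hC₄meet : (C₄ ∩ C₂).Nonempty := by
    by_contra hdisj
    have hC₄C₁ : C₄ ⊆ C₁ \ {u} := fun w hw =>
      have hw' := hC₄out ⟨hw, fun hwC₂ => hdisj ⟨w, hw, hwC₂⟩⟩
      ⟨hw'.1.1, hw'.2⟩
    exact hC₄.not_indep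
      (hC₁.ssubset_indep (hC₄C₁.trans_ssubset (sdiff_singleton_ssubset.2 huC₁)))
  have hfin : (C₁ \ C₂).Finite := hC₁.finite.sdiff
  refine ih _ ?_ hC₄ hC₄meet hxC₄ rfl
  calc (C₄ \ C₂).ncard ≤ ((C₁ \ C₂) \ {u}).ncard := ncard_le_ncard hC₄out hfin.sdiff
    _ < n := h ▸ ncard_sdiff_singleton_lt_of_mem ⟨huC₁, huC₂⟩ hfin

def IsSeparator (M : Matroid α) (A : Set α) : Prop :=
  A ⊆ M.E ∧ ∀ ⦃C⦄, M.IsCircuit C → C ⊆ A ∨ Disjoint C A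

lemma IsSeparator.subset_of_mem (hA : IsSeparator M A) (hC : M.IsCircuit C) (hxC : x ∈ C)
    (hxA : x ∈ A) : C ⊆ A :=
  (hA.2 hC).resolve_right (not_disjoint_iff.2 ⟨x, hxC, hxA⟩)

lemma IsSeparator.compl (hA : IsSeparator M A) : IsSeparator M (M.E \ A) :=
  ⟨sdiff_subset, fun _ hC => (hA.2 hC).symm.imp
    (fun h => subset_sdiff.2 ⟨hC.subset_ground, h⟩) (fun h => disjoint_sdiff_right.mono_left h)⟩

lemma conn_iff_forall_isSeparator [M.Finitary] :
    Conn M ↔ M.E.Nonempty ∧ ∀ A, IsSeparator M A → A.Nonempty → A = M.E := by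
  refine ⟨fun ⟨hne, hM⟩ => ⟨hne, fun A hA ⟨x, hxA⟩ => hA.1.antisymm fun y hy => ?_⟩,
    fun ⟨hne, hsep⟩ => ⟨hne, fun x y hx hy => ?_⟩⟩
  · obtain rfl | ⟨C, hC, hxC, hyC⟩ := hM (hA.1 hxA) hy
    exacts [hxA, hA.subset_of_mem hC hxC hxA hyC]
  · set A := {w ∈ M.E | x = w ∨ ∃ C, M.IsCircuit C ∧ x ∈ C ∧ w ∈ C}
    have hA : IsSeparator M A := by
      refine ⟨fun w hw => hw.1, fun C hC => or_iff_not_imp_right.2 fun hCA => ?_⟩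
      obtain ⟨w, hwC, -, hxw⟩ := not_disjoint_iff.1 hCA
      refine fun c hcC => ⟨hC.subset_ground hcC, Or.inr ?_⟩
      obtain rfl | ⟨C', hC', hxC', hwC'⟩ := hxw
      · exact ⟨C, hC, hwC, hcC⟩
      · exact exists_isCircuit_mem_mem_of_inter_nonempty hC' hC ⟨w, hwC', hwC⟩ hxC' hcC
    have hyA : y ∈ A := hsep A hA ⟨x, hx, Or.inl rfl⟩ ▸ hy
    exact hyA.2

lemma IsSeparator.subset_closure_inter (hA : IsSeparator M A) (hB : M.IsBase B) :
    A ⊆ M.closure (B ∩ A) := by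
  intro z hzA
  by_cases hzB : z ∈ B
  · exact M.subset_closure (B ∩ A) (inter_subset_left.trans hB.subset_ground) ⟨hzB, hzA⟩
  have hC := hB.fundCircuit_isCircuit (hA.1 hzA) hzB
  have hCA := hA.subset_of_mem hC (M.mem_fundCircuit z B) hzA
  have hCB : M.fundCircuit z B \ {z} ⊆ B ∩ A := fun w hw =>
    ⟨(M.fundCircuit_subset_insert z B hw.1).resolve_left hw.2, hCA hw.1⟩
  exact M.closure_subset_closure hCB
    (hC.mem_closure_sdiff_singleton_of_mem (M.mem_fundCircuit z B))

lemma IsSeparator.isBase_inter_union_sdiff (hA : IsSeparator M A) (hB : M.IsBase B)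
    (hB' : M.IsBase B') : M.IsBase (B ∩ A ∪ B' \ A) := by
  have hXE : B ∩ A ∪ B' \ A ⊆ M.E :=
    union_subset (inter_subset_left.trans hB.subset_ground) (sdiff_subset.trans hB'.subset_ground)
  refine Indep.isBase_of_ground_subset_closure ?_ fun z hz => ?_
  · refine (indep_iff_forall_subset_not_isCircuit hXE).2 fun C hCX hC => ?_
    rcases hA.2 hC with hCA | hCA
    · exact hC.not_indep (hB.indep.subset fun w hw =>
        ((hCX hw).resolve_right fun h => h.2 (hCA hw)).1)
    · exact hC.not_indep (hB'.indep.subset fun w hw =>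
        ((hCX hw).resolve_left fun h => hCA.notMem_of_mem_left hw h.2).1)
  by_cases hzA : z ∈ A
  · exact M.closure_subset_closure subset_union_left (hA.subset_closure_inter hB hzA)
  · have h := hA.compl.subset_closure_inter hB' ⟨hz, hzA⟩
    rw [← inter_sdiff_assoc, inter_eq_left.2 hB'.subset_ground] at h
    exact M.closure_subset_closure subset_union_right h

/-- A cocircuit `K` crossing `A` would leave bases `B`, `B'` missing `K ∩ A` and `K \ A`;
their mix across `A` is a base missing `K`. -/
lemma IsSeparator.dual (hA : IsSeparator M A) : IsSeparator M✶ A := by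
  refine ⟨hA.1, fun K hK => ?_⟩
  by_contra! hcross
  obtain ⟨hKA, hKdisj⟩ := hcross
  have hin : M✶.Indep (K ∩ A) :=
    hK.ssubset_indep (inter_subset_left.ssubset_of_ne fun h => hKA (h ▸ inter_subset_right))
  have hout : M✶.Indep (K \ A) :=
    hK.ssubset_indep (sdiff_subset.ssubset_of_ne fun h => hKdisj (h ▸ disjoint_sdiff_left))
  obtain ⟨-, B, hB, hBin⟩ := dual_indep_iff_exists'.1 hin
  obtain ⟨-, B', hB', hBout⟩ := dual_indep_iff_exists'.1 hout
  refine hK.not_indep (dual_indep_iff_exists'.2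
    ⟨hK.subset_ground, _, hA.isBase_inter_union_sdiff hB hB', ?_⟩)
  refine disjoint_union_right.2
    ⟨disjoint_left.2 fun w hwK hw => ?_, disjoint_left.2 fun w hwK hw => ?_⟩
  exacts [hBin.notMem_of_mem_left ⟨hwK, hw.2⟩ hw.1, hBout.notMem_of_mem_left ⟨hwK, hw.2⟩ hw.1]

lemma isSeparator_dual_iff : IsSeparator M✶ A ↔ IsSeparator M A :=
  ⟨fun h => M.dual_dual ▸ h.dual, IsSeparator.dual⟩

lemma conn_dual_iff [M.Finite] : Conn M✶ ↔ Conn M := by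
  simp only [conn_iff_forall_isSeparator, isSeparator_dual_iff, dual_ground]

lemma isColoopMatroid_iff_isLoopMatroid_dual : IsColoopMatroid M ↔ IsLoopMatroid M✶ := by
  refine exists_congr fun e => and_congr_right fun hE => ?_
  rw [singleton_dep, dual_isLoop_iff_isColoop, indep_singleton]
  refine ⟨fun he => (isColoop_iff_forall_notMem_isCircuit he.mem_ground).2 fun C hC heC => ?_,
    IsColoop.isNonloop⟩
  obtain rfl := (subset_singleton_iff_eq.1 (hE ▸ hC.subset_ground)).resolve_left
    hC.nonempty.ne_empty
  exact hC.not_indep (indep_singleton.2 he)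

lemma Conn.indep_singleton (hM : Conn M) (he : e ∈ M.E) (hx : x ∈ M.E) (hxe : x ≠ e) :
    M.Indep {e} := by
  obtain rfl | ⟨C, hC, heC, hxC⟩ := (conn_iff.1 hM).2 he hx
  · exact absurd rfl hxe
  · exact hC.ssubset_indep (ssubset_of_subset_of_ne (singleton_subset_iff.2 heC)
      fun h => hxe (h ▸ hxC : x ∈ ({e} : Set α)))

lemma conn_of_ground_eq_singleton (hE : M.E = {v}) : Conn M :=
  ⟨⟨v, hE.symm.subset rfl⟩, fun x y hx hy =>
    Or.inl ((hE ▸ hx : x ∈ ({v} : Set α)).trans (hE ▸ hy : y ∈ ({v} : Set α)).symm)⟩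

/-- Eliminating `e` between `D` and a circuit through `e` and a point outside `A` leaves a circuit
of `M ＼ {e}` that crosses `A` or is strictly inside the second circuit. -/
lemma Conn.not_sdiff_singleton_subset_of_isSeparator_delete (hM : Conn M)
    (hA : IsSeparator (M ＼ {e}) A) (hAc : ((M.E \ {e}) \ A).Nonempty) (hD : M.IsCircuit D)
    (heD : e ∈ D) : ¬ D \ {e} ⊆ A := by
  intro hDA
  obtain ⟨a, ⟨haE, hae⟩, haA⟩ := hAc
  obtain rfl | ⟨D₂, hD₂, heD₂, haD₂⟩ := (conn_iff.1 hM).2 (hD.subset_ground heD) haE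
  · exact hae rfl
  have haD : a ∉ D := fun h => haA (hDA ⟨h, hae⟩)
  obtain ⟨F, hFss, hF, haF⟩ := hD₂.strong_elimination hD heD₂ heD haD₂ haD
  have heF : e ∉ F := fun h => (hFss h).2 rfl
  have hFA : Disjoint F A := (hA.2 (delete_isCircuit_iff.2
    ⟨hF, disjoint_singleton_right.2 heF⟩)).resolve_left fun h => haA (h haF)
  have hFD₂ : F ⊆ D₂ \ {e} := fun w hw => ⟨(hFss hw).1.resolve_right fun hwD =>
    hFA.notMem_of_mem_left hw (hDA ⟨hwD, (hFss hw).2⟩), (hFss hw).2⟩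
  exact hF.not_indep (hD₂.ssubset_indep (hFD₂.trans_ssubset (sdiff_singleton_ssubset.2 heD₂)))

lemma isCircuit_contractElem_of_forall_not_subset (hC : M.IsCircuit C) (heC : e ∉ C)
    (h : ∀ D, M.IsCircuit D → e ∈ D → ¬ D \ {e} ⊆ C) : (M ／ {e}).IsCircuit C := by
  obtain ⟨C', hC'C, hC'⟩ :=
    (hC.contract_dep (disjoint_singleton_left.2 heC)).exists_isCircuit_subset
  obtain ⟨D, hD, hC'D, hDss⟩ := hC'.exists_subset_isCircuit_of_contract
  have heD : e ∉ D := fun heD => h D hD heD fun w hw => hC'C ((hDss hw.1).resolve_right hw.2)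
  have hDC' : D ⊆ C' := fun w hw => (hDss hw).resolve_right fun h => heD (h ▸ hw)
  have hDC : D = C := hD.eq_of_subset_isCircuit hC (hDC'.trans hC'C)
  rwa [← hC'C.antisymm (hDC ▸ hDC')]

lemma Conn.conn_delete_or_conn_contract [M.Finitary] (hM : Conn M)
    (hne : (M.E \ {e}).Nonempty) : Conn (M ＼ {e}) ∨ Conn (M ／ {e}) := by
  refine or_iff_not_imp_left.2 fun hdel => ?_
  rw [conn_iff_forall_isSeparator] at hdel
  push Not at hdel
  obtain ⟨A, hA, hAne, hAE⟩ := hdel hne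
  have hAc : ((M.E \ {e}) \ A).Nonempty := sdiff_nonempty.2 fun h => hAE (hA.1.antisymm h)
  have hAc' : ((M.E \ {e}) \ ((M.E \ {e}) \ A)).Nonempty := by
    rw [sdiff_sdiff_cancel_left (show A ⊆ M.E \ {e} from hA.1)]
    exact hAne
  have hcontract : ∀ C, M.IsCircuit C → e ∉ C → (M ／ {e}).IsCircuit C := by
    refine fun C hC heC => isCircuit_contractElem_of_forall_not_subset hC heC
      fun D hD heD hDC => ?_
    have hCdel : (M ＼ {e}).IsCircuit C :=
      delete_isCircuit_iff.2 ⟨hC, disjoint_singleton_right.2 heC⟩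
    rcases hA.2 hCdel with hCA | hCA
    · exact hM.not_sdiff_singleton_subset_of_isSeparator_delete hA hAc hD heD (hDC.trans hCA)
    · exact hM.not_sdiff_singleton_subset_of_isSeparator_delete hA.compl hAc' hD heD
        (hDC.trans (subset_sdiff.2 ⟨hCdel.subset_ground, hCA⟩))
  refine ⟨hne, fun x y hx hy => ?_⟩
  obtain rfl | ⟨C, hC, hxC, hyC⟩ := (conn_iff.1 hM).2 hx.1 hy.1
  · exact Or.inl rfl
  by_cases heC : e ∈ C
  · exact Or.inr ⟨C \ {e}, hC.contractElem_isCircuit ⟨x, hxC, e, heC, hx.2⟩ heC,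
      ⟨hxC, hx.2⟩, ⟨hyC, hy.2⟩⟩
  · exact Or.inr ⟨C, hcontract C hC heC, hxC, hyC⟩

lemma fundCircuit_delete_eq (hI : I ⊆ M.E \ {e}) (hx : x ∈ M.E \ {e}) :
    (M ＼ {e}).fundCircuit x I = M.fundCircuit x I :=
  fundCircuit_restrict hI hx sdiff_subset

lemma fundCct_eq_fundCircuit_s8 (hB : M.IsBase B) (he : e ∈ M.E \ B) :
    fundCct M B e = M.fundCircuit e B := by
  have hset : {C | Cct M C ∧ C ⊆ insert e B} = {M.fundCircuit e B} := by
    ext C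
    refine ⟨fun h => IsCircuit.eq_fundCircuit_of_subset h.1 hB.indep h.2, ?_⟩
    rintro rfl
    exact ⟨hB.fundCircuit_isCircuit he.1 he.2, M.fundCircuit_subset_insert e B⟩
  rw [fundCct, hset, sInter_singleton]

lemma fundCocct_eq_fundCocircuit (hB : M.IsBase B) (hb : b ∈ B) :
    fundCocct M B b = M.fundCocircuit b B :=
  fundCct_eq_fundCircuit_s8 (M := M✶) hB.compl_isBase_dual ⟨hB.subset_ground hb, fun h => h.2 hb⟩

section Activity

variable [LinearOrder α]

lemma mem_actInt_iff (hB : M.IsBase B) :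
    b ∈ ActInt M B ↔ b ∈ B ∧ ∀ x ∈ M.E \ B, b ∈ M.fundCircuit x B → b ≤ x := by
  refine and_congr_right fun hb => ?_
  rw [fundCocct_eq_fundCocircuit hB hb, IsLeast, and_iff_right (M.mem_fundCocircuit b B)]
  refine ⟨fun h x _ hbx => h (hB.mem_fundCocircuit_iff_mem_fundCircuit.2 hbx), fun h x hx => ?_⟩
  obtain rfl | hx' := M.fundCocircuit_subset_insert_compl b B hx
  exacts [le_rfl, h x hx' (hB.mem_fundCocircuit_iff_mem_fundCircuit.1 hx)]

lemma mem_actExt_iff (hB : M.IsBase B) :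
    e ∈ ActExt M B ↔ e ∈ M.E \ B ∧ ∀ x ∈ M.fundCircuit e B, e ≤ x := by
  refine and_congr_right fun he => ?_
  rw [fundCct_eq_fundCircuit_s8 hB he, IsLeast, and_iff_right (M.mem_fundCircuit e B)]
  rfl

lemma actInt_eq_actExt_dual (hBE : B ⊆ M.E) : ActInt M B = ActExt M✶ (M.E \ B) := by
  ext b
  simp only [ActInt, ActExt, mem_ofPred_eq, dual_ground, sdiff_sdiff_cancel_left hBE]
  rfl

lemma actExt_eq_actInt_dual (hBE : B ⊆ M.E) : ActExt M B = ActInt M✶ (M.E \ B) := by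
  have h := actInt_eq_actExt_dual (M := M✶) (B := M.E \ B) sdiff_subset
  rwa [dual_dual, dual_ground, sdiff_sdiff_cancel_left hBE, eq_comm] at h

lemma uIntBase_iff_uExtBase_dual (hBE : B ⊆ M.E) : UIntBase M B ↔ UExtBase M✶ (M.E \ B) := by
  rw [UIntBase, UExtBase, dual_isBase_iff sdiff_subset, sdiff_sdiff_cancel_left hBE,
    ← actExt_eq_actInt_dual hBE, ← actInt_eq_actExt_dual hBE, and_comm (a := _ = 1)]

lemma uExtBase_iff_uIntBase_dual (hBE : B ⊆ M.E) : UExtBase M B ↔ UIntBase M✶ (M.E \ B) := by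
  have h := uIntBase_iff_uExtBase_dual (M := M✶) (B := M.E \ B) sdiff_subset
  rwa [dual_dual, dual_ground, sdiff_sdiff_cancel_left hBE, iff_comm] at h

/-- Every fundamental circuit through the least element of a separator stays inside it. -/
lemma IsSeparator.mem_actInt_union_actExt (hA : IsSeparator M A) (hm : IsLeast A m)
    (hB : M.IsBase B) : m ∈ ActInt M B ∪ ActExt M B := by
  by_cases hmB : m ∈ B
  · refine Or.inl ((mem_actInt_iff hB).2 ⟨hmB, fun x hx hmx => hm.2 ?_⟩)
    exact hA.subset_of_mem (hB.fundCircuit_isCircuit hx.1 hx.2) hmx hm.1 (M.mem_fundCircuit x B)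
  · refine Or.inr ((mem_actExt_iff hB).2 ⟨⟨hA.1 hm.1, hmB⟩, fun x hx => hm.2 ?_⟩)
    exact hA.subset_of_mem (hB.fundCircuit_isCircuit (hA.1 hm.1) hmB) (M.mem_fundCircuit m B)
      hm.1 hx

lemma UIntBase.actExt_eq_empty [M.Finite] (h : UIntBase M B) : ActExt M B = ∅ :=
  (ncard_eq_zero (M.ground_finite.subset fun _ hx => hx.1.1)).1 h.2.2

/-- Each nonempty separator has the unique internally active element as its least element, so
there is no room for two disjoint ones. -/
lemma UIntBase.conn [M.Finite] (h : UIntBase M B) : Conn M := by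
  obtain ⟨a, ha⟩ := ncard_eq_one.1 h.2.1
  have hmem : ∀ A, IsSeparator M A → A.Nonempty → a ∈ A := by
    intro A hA hne
    obtain ⟨m, hmA, hmin⟩ := exists_min_image A id (M.ground_finite.subset hA.1) hne
    have hact := hA.mem_actInt_union_actExt ⟨hmA, hmin⟩ h.1
    rw [ha, h.actExt_eq_empty, union_empty, mem_singleton_iff] at hact
    exact hact ▸ hmA
  have haE : a ∈ M.E := h.1.subset_ground ((ha ▸ mem_singleton a : a ∈ ActInt M B).1)
  refine conn_iff_forall_isSeparator.2 ⟨⟨a, haE⟩, fun A hA hne => ?_⟩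
  by_contra hAE
  have hc : (M.E \ A).Nonempty := sdiff_nonempty.2 fun h => hAE (hA.1.antisymm h)
  exact (hmem _ hA.compl hc).2 (hmem A hA hne)

lemma UIntBase.not_isLoopMatroid (h : UIntBase M B) : ¬ IsLoopMatroid M := by
  rintro ⟨v, hE, hv⟩
  have hBv : B ≠ {v} := fun hB => hv.not_indep (hB ▸ h.1.indep)
  rw [subset_singleton_iff_eq.1 (hE ▸ h.1.subset_ground) |>.resolve_right hBv] at h
  simp [UIntBase, ActInt] at h

lemma actInt_delete_eq (hmax : ∀ x ∈ M.E, x ≤ e) (hcl : M.Coindep {e})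
    (hB : (M ＼ {e}).IsBase B) : ActInt (M ＼ {e}) B = ActInt M B := by
  have hBM := (hcl.delete_isBase_iff.1 hB).1
  ext b
  rw [mem_actInt_iff hB, mem_actInt_iff hBM, delete_ground]
  refine and_congr_right fun hb => ⟨fun h x hx hbx => ?_, fun h x hx hbx => ?_⟩
  · obtain rfl | hxe := eq_or_ne x e
    · exact hmax b (hBM.subset_ground hb)
    · exact h x ⟨⟨hx.1, hxe⟩, hx.2⟩ (by rwa [fundCircuit_delete_eq hB.subset_ground ⟨hx.1, hxe⟩])
  · exact h x ⟨hx.1.1, hx.2⟩ (by rwa [← fundCircuit_delete_eq hB.subset_ground hx.1])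

/-- The maximum `e` is never externally active: its fundamental circuit contains a smaller
element because `{e}` is independent. -/
lemma actExt_delete_eq (hmax : ∀ x ∈ M.E, x ≤ e) (hcl : M.Coindep {e})
    (hnl : M.Indep {e}) (hB : (M ＼ {e}).IsBase B) :
    ActExt (M ＼ {e}) B = ActExt M B := by
  have hBM := (hcl.delete_isBase_iff.1 hB).1
  ext x
  rw [mem_actExt_iff hB, mem_actExt_iff hBM, delete_ground]
  refine ⟨fun ⟨⟨hxE, hxB⟩, hmin⟩ =>
    ⟨⟨hxE.1, hxB⟩, fundCircuit_delete_eq hB.subset_ground hxE ▸ hmin⟩, fun ⟨⟨hxE, hxB⟩, hmin⟩ => ?_⟩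
  have hxe : x ≠ e := by
    rintro rfl
    obtain ⟨y, hyC, hyx⟩ : ∃ y ∈ M.fundCircuit x B, y ≠ x := by
      by_contra! h
      exact (hBM.fundCircuit_isCircuit hxE hxB).not_indep (hnl.subset h)
    exact hyx ((hmax y (M.fundCircuit_subset_ground hxE hBM.subset_ground hyC)).antisymm
      (hmin y hyC))
  exact ⟨⟨⟨hxE, hxe⟩, hxB⟩, (fundCircuit_delete_eq hB.subset_ground ⟨hxE, hxe⟩).symm ▸ hmin⟩

lemma UIntBase.of_delete (hmax : ∀ x ∈ M.E, x ≤ e) (hcl : M.Coindep {e})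
    (hnl : M.Indep {e}) (h : UIntBase (M ＼ {e}) B) : UIntBase M B :=
  ⟨(hcl.delete_isBase_iff.1 h.1).1, actInt_delete_eq hmax hcl h.1 ▸ h.2.1,
    actExt_delete_eq hmax hcl hnl h.1 ▸ h.2.2⟩

lemma UExtBase.of_delete (hmax : ∀ x ∈ M.E, x ≤ e) (hcl : M.Coindep {e})
    (hnl : M.Indep {e}) (h : UExtBase (M ＼ {e}) B) : UExtBase M B :=
  ⟨(hcl.delete_isBase_iff.1 h.1).1, actInt_delete_eq hmax hcl h.1 ▸ h.2.1,
    actExt_delete_eq hmax hcl hnl h.1 ▸ h.2.2⟩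

lemma UIntBase.of_contract (hmax : ∀ x ∈ M.E, x ≤ e) (hcl : M.Coindep {e})
    (hnl : M.Indep {e}) (h : UIntBase (M ／ {e}) B) :
    UIntBase M (insert e B) := by
  have hBE : B ⊆ M.E \ {e} := h.1.subset_ground
  rw [uIntBase_iff_uExtBase_dual hBE, dual_contract] at h
  have h' := h.of_delete (M := M✶) hmax (dual_coindep_iff.2 hnl) hcl
  have hX : (M ／ {e}).E \ B ⊆ M✶.E := sdiff_subset.trans sdiff_subset
  rw [uExtBase_iff_uIntBase_dual hX, dual_dual] at h'
  convert h' using 1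
  have he : e ∈ M.E := hcl.subset_ground rfl
  ext x
  have hxB := @hBE x
  simp only [contract_ground, dual_ground, mem_sdiff, mem_insert_iff, mem_singleton_iff] at hxB ⊢
  grind

lemma uIntBase_of_ground_eq_singleton (hE : M.E = {v}) (hv : M.Indep {v}) : UIntBase M {v} := by
  have hB : M.IsBase {v} :=
    hv.isBase_of_maximal fun J hJ hvJ => hvJ.antisymm (hE ▸ hJ.subset_ground)
  have hEB : M.E \ {v} = ∅ := by rw [hE, sdiff_self]
  have hint : ActInt M {v} = {v} := by
    ext b
    simp [mem_actInt_iff hB, hEB]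
  have hext : ActExt M {v} = ∅ := by
    ext x
    simp [mem_actExt_iff hB, hEB]
  exact ⟨hB, by rw [hint, ncard_singleton], by rw [hext, ncard_empty]⟩

theorem exists_uIntBase [M.Finite] (hM : Conn M) (hnl : ¬ IsLoopMatroid M) :
    ∃ B, UIntBase M B := by
  induction h : M.E.ncard using Nat.strong_induction_on generalizing M with
  | _ n ih =>
  obtain ⟨e, he, hmax⟩ := exists_max_image M.E id M.ground_finite hM.1
  by_cases hne : (M.E \ {e}).Nonempty
  swap
  · have hE : M.E = {e} :=
      (sdiff_eq_empty.1 (not_nonempty_iff_eq_empty.1 hne)).antisymm (singleton_subset_iff.2 he)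
    refine ⟨{e}, uIntBase_of_ground_eq_singleton hE (by_contra fun hdep => hnl ⟨e, hE, ?_⟩)⟩
    exact (M.not_indep_iff hE.symm.subset).1 hdep
  obtain ⟨x, hxE, hxe⟩ := hne
  have hnle : M.Indep {e} := hM.indep_singleton he hxE hxe
  have hcle : M.Coindep {e} := (conn_dual_iff.2 hM).indep_singleton he hxE hxe
  have hlt : (M.E \ {e}).ncard < n := h ▸ ncard_sdiff_singleton_lt_of_mem he M.ground_finite
  have hdelete (hc : Conn (M ＼ {e})) : ∃ B, UIntBase M B := by
    have hnl' : ¬ IsLoopMatroid (M ＼ {e}) := by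
      rintro ⟨w, hw, hwdep⟩
      have hwE : w ∈ M.E \ {e} := hw.symm.subset rfl
      exact (delete_dep_iff.1 hwdep).1.not_indep
        (hM.indep_singleton hwE.1 he fun h => hwE.2 h.symm)
    obtain ⟨B, hB⟩ := ih _ hlt hc hnl' rfl
    exact ⟨B, hB.of_delete hmax hcle hnle⟩
  by_cases hloop : IsLoopMatroid (M ／ {e})
  · obtain ⟨w, hw, -⟩ := hloop
    exact hdelete (conn_of_ground_eq_singleton hw)
  rcases hM.conn_delete_or_conn_contract ⟨x, hxE, hxe⟩ with hc | hc
  · exact hdelete hc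
  · obtain ⟨B, hB⟩ := ih _ hlt hc hloop rfl
    exact ⟨insert e B, hB.of_contract hmax hcle hnle⟩

theorem beta_ne_zero_iff [M.Finite] : beta M ≠ 0 ↔ Conn M ∧ ¬ IsLoopMatroid M := by
  have hfin : {B | UIntBase M B}.Finite :=
    M.ground_finite.finite_subsets.subset fun _ hB => hB.1.subset_ground
  rw [beta, Ne, ncard_eq_zero hfin, ← Ne, ← nonempty_iff_ne_empty]
  exact ⟨fun ⟨_, hB⟩ => ⟨hB.conn, hB.not_isLoopMatroid⟩, fun ⟨hM, hnl⟩ => exists_uIntBase hM hnl⟩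

lemma betaStar_eq_beta_dual (M : Matroid α) : betaStar M = beta M✶ := by
  have himage : {B | UExtBase M B} = (M.E \ ·) '' {D | UIntBase M✶ D} := by
    ext B
    refine ⟨fun hB => ⟨M.E \ B, (uExtBase_iff_uIntBase_dual hB.1.subset_ground).1 hB,
      sdiff_sdiff_cancel_left hB.1.subset_ground⟩, ?_⟩
    rintro ⟨D, hD, rfl⟩
    have hDE : D ⊆ M.E := hD.1.subset_ground
    exact (uExtBase_iff_uIntBase_dual sdiff_subset).2 (by rwa [sdiff_sdiff_cancel_left hDE])
  rw [betaStar, beta, himage, InjOn.ncard_image fun D₁ hD₁ D₂ hD₂ h => ?_]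
  have hD₁E : D₁ ⊆ M.E := hD₁.1.subset_ground
  have hD₂E : D₂ ⊆ M.E := hD₂.1.subset_ground
  rw [← sdiff_sdiff_cancel_left hD₁E, ← sdiff_sdiff_cancel_left hD₂E]
  exact congrArg (M.E \ ·) h

theorem betaStar_ne_zero_iff [M.Finite] : betaStar M ≠ 0 ↔ Conn M ∧ ¬ IsColoopMatroid M := by
  rw [betaStar_eq_beta_dual, beta_ne_zero_iff, conn_dual_iff,
    isColoopMatroid_iff_isLoopMatroid_dual]

lemma IsFiltration.F_subset_ground {f : Filtration α} (hf : IsFiltration M f)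
    (k : Fin (f.ι + 1)) : f.F k ⊆ M.E :=
  hf.2.2.1 ▸ Fin.monotone_iff_le_succ.2 (fun k => (hf.2.2.2.1 k).subset) (Fin.le_last k)

lemma IsFiltration.F'_subset_ground {f : Filtration α} (hf : IsFiltration M f)
    (k : Fin (f.ε + 1)) : f.F' k ⊆ M.E :=
  (Fin.antitone_iff_succ_le.2 (fun k => (hf.2.2.2.2.1 k).subset) (Fin.zero_le k)).trans
    (hf.2.1 ▸ hf.F_subset_ground 0)

lemma IsFiltration.finite_intMinor [M.Finite] {f : Filtration α}
    (hf : IsFiltration M f) (k : Fin f.ι) : (intMinor M f k).Finite :=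
  ⟨(M.ground_finite.subset (hf.F_subset_ground k.succ)).subset sdiff_subset⟩

lemma IsFiltration.finite_extMinor [M.Finite] {f : Filtration α}
    (hf : IsFiltration M f) (k : Fin f.ε) : (extMinor M f k).Finite :=
  ⟨(M.ground_finite.subset (hf.F'_subset_ground k.castSucc)).subset sdiff_subset⟩

end Activity

end ActiveBij

namespace ActiveBij

/-- A filtration is connected iff the product of the beta invariants of its induced
internal minors and of the dual beta invariants of its induced external minors is nonzero. -/
theorem stmt8 {α : Type*} [LinearOrder α] (M : Matroid α) [M.Finite]
    (f : Filtration α) (hf : IsFiltration M f) :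
    IsConnFiltration M f ↔
      (∏ k : Fin f.ι, beta (intMinor M f k)) *
        (∏ k : Fin f.ε, betaStar (extMinor M f k)) ≠ 0 := by
  have hint (k : Fin f.ι) :
      beta (intMinor M f k) ≠ 0 ↔ Conn (intMinor M f k) ∧ ¬ IsLoopMatroid (intMinor M f k) :=
    have := hf.finite_intMinor k
    beta_ne_zero_iff
  have hext (k : Fin f.ε) : betaStar (extMinor M f k) ≠ 0 ↔
      Conn (extMinor M f k) ∧ ¬ IsColoopMatroid (extMinor M f k) :=
    have := hf.finite_extMinor k
    betaStar_ne_zero_iff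
  simp only [IsConnFiltration, hf, true_and, mul_ne_zero_iff, Finset.prod_ne_zero_iff,
    Finset.mem_univ, forall_const, hint, hext]

end ActiveBij
end
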